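/- Let x > 0 and let μ be a locally finite Borel measure on (0,∞) satisfying μ(λ·A) = λ^(x/2) · μ(A) for every Borel set A ⊆ (0,∞) and every λ > 0, and ∫₀^∞ e^(−u) dμ(u) = π^(x/2). Then for every nonnegative Borel measurable function φ : (0,∞) → [0,∞], the Lebesgue integral of φ against μ equals (π^(x/2)/Γ(x/2)) · ∫₀^∞ φ(u) · u^(x/2−1) du; that is, μ-integration is the normalized Mellin transform evaluated at s = x/2. -/

import Mathlib

open MeasureTheory Set
open scoped ENNReal

/-
A scaling-covariant measure of degree `s` on `(0,∞)` is determined by `c = μ (0,1]`: scaling gives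
`μ (0,q] = c q^s`, so `μ = c · d(u^s) = c s u^(s-1) du`, provided `μ` is finite on the intervals
`(0,q]`; this finiteness follows from the normalisation, since `e^(-u) ≥ e^(-q)` on `(0,q]`.
Integrating `e^(-u)` against `c s u^(s-1) du` gives `c s Γ(s) = π^s`, which fixes the constant.
-/

theorem MeasureTheory.Measure.ext_of_Iic_of_ne_top {α : Type*} [TopologicalSpace α]
    {m : MeasurableSpace α} [SecondCountableTopology α] [LinearOrder α] [OrderTopology α]
    [BorelSpace α] [NoMinOrder α] (μ ν : Measure α) (hμ : ∀ a, μ (Iic a) ≠ ∞)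
    (h : ∀ a, μ (Iic a) = ν (Iic a)) : μ = ν := by
  refine Measure.ext_of_Ioc' μ ν (fun a b _ => ne_top_of_le_ne_top (hμ b)
    (measure_mono Ioc_subset_Iic_self)) fun a b hab => ?_
  have hsub : Iic a ⊆ Iic b := Iic_subset_Iic.2 hab.le
  rw [← Iic_sdiff_Iic, measure_sdiff hsub nullMeasurableSet_Iic (hμ a),
    measure_sdiff hsub nullMeasurableSet_Iic (h a ▸ hμ a), h a, h b]

theorem measure_Iic_eq_measure_Ioc {α : Type*} [LinearOrder α]
    {m : MeasurableSpace α} {μ : Measure α} {a : α} (ha : μ (Iic a) = 0) (b : α) :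
    μ (Iic b) = μ (Ioc a b) := by
  refine le_antisymm ?_ (measure_mono Ioc_subset_Iic_self)
  calc μ (Iic b) ≤ μ (Iic a ∪ Ioc a b) := measure_mono fun u hu => by
        rcases le_or_gt u a with h | h
        exacts [Or.inl h, Or.inr ⟨h, hu⟩]
    _ ≤ μ (Iic a) + μ (Ioc a b) := measure_union_le _ _
    _ = μ (Ioc a b) := by rw [ha, zero_add]

theorem measure_Iic_le_exp_mul_lintegral_exp_neg (μ : Measure ℝ) (a : ℝ) :
    μ (Iic a) ≤ ENNReal.ofReal (Real.exp a) * ∫⁻ u, ENNReal.ofReal (Real.exp (-u)) ∂μ := by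
  have hexp : ENNReal.ofReal (Real.exp a) * ENNReal.ofReal (Real.exp (-a)) = 1 := by
    rw [← ENNReal.ofReal_mul (Real.exp_nonneg a), ← Real.exp_add, add_neg_cancel, Real.exp_zero,
      ENNReal.ofReal_one]
  calc μ (Iic a) = ENNReal.ofReal (Real.exp a) * (ENNReal.ofReal (Real.exp (-a)) * μ (Iic a)) := by
        rw [← mul_assoc, hexp, one_mul]
    _ = ENNReal.ofReal (Real.exp a) * ∫⁻ _ in Iic a, ENNReal.ofReal (Real.exp (-a)) ∂μ := by
        rw [setLIntegral_const]
    _ ≤ ENNReal.ofReal (Real.exp a) * ∫⁻ u in Iic a, ENNReal.ofReal (Real.exp (-u)) ∂μ := by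
        gcongr 1
        refine setLIntegral_mono (by fun_prop) fun u hu => ?_
        gcongr
        exact hu
    _ ≤ ENNReal.ofReal (Real.exp a) * ∫⁻ u, ENNReal.ofReal (Real.exp (-u)) ∂μ := by
        gcongr 1
        exact setLIntegral_le_lintegral _ _

-- `d(u ^ s)` on `(0, ∞)`
noncomputable def powMeasure (s : ℝ) : Measure ℝ :=
  (volume.restrict (Ioi 0)).withDensity fun u => ENNReal.ofReal (s * u ^ (s - 1))

theorem powMeasure_Iic_zero (s : ℝ) : powMeasure s (Iic 0) = 0 := by
  rw [powMeasure, withDensity_apply _ measurableSet_Iic,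
    Measure.restrict_restrict measurableSet_Iic, Iic_inter_Ioi, Ioc_self, Measure.restrict_empty, lintegral_zero_measure]

theorem powMeasure_Ioc_zero {s : ℝ} (hs : 0 < s) {q : ℝ} (hq : 0 ≤ q) :
    powMeasure s (Ioc 0 q) = ENNReal.ofReal (q ^ s) := by
  have hint : IntegrableOn (fun u : ℝ => s * u ^ (s - 1)) (Ioc 0 q) :=
    ((intervalIntegrable_iff_integrableOn_Ioc_of_le hq).mp
      (intervalIntegral.intervalIntegrable_rpow' (by linarith))).const_mul s
  have hnonneg : 0 ≤ᵐ[volume.restrict (Ioc 0 q)] fun u : ℝ => s * u ^ (s - 1) := by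
    filter_upwards [self_mem_ae_restrict measurableSet_Ioc] with u hu
    exact mul_nonneg hs.le (Real.rpow_nonneg hu.1.le _)
  rw [powMeasure, withDensity_apply _ measurableSet_Ioc,
    Measure.restrict_restrict measurableSet_Ioc, inter_eq_left.2 Ioc_subset_Ioi_self, ← ofReal_integral_eq_lintegral_ofReal hint hnonneg,
    ← intervalIntegral.integral_of_le hq, intervalIntegral.integral_const_mul,
    integral_rpow (Or.inl (by linarith)), sub_add_cancel, Real.zero_rpow hs.ne', sub_zero,
    mul_div_cancel₀ _ hs.ne']

theorem lintegral_powMeasure {s : ℝ} (hs : 0 ≤ s) {φ : ℝ → ℝ≥0∞} (hφ : Measurable φ) :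
    ∫⁻ u, φ u ∂powMeasure s
      = ENNReal.ofReal s * ∫⁻ u in Ioi 0, φ u * ENNReal.ofReal (u ^ (s - 1)) := by
  rw [powMeasure, lintegral_withDensity_eq_lintegral_mul _ (by fun_prop) hφ,
    ← lintegral_const_mul' _ _ ENNReal.ofReal_ne_top]
  refine lintegral_congr fun u => ?_
  rw [Pi.mul_apply, ENNReal.ofReal_mul hs]
  ring

theorem lintegral_exp_neg_mul_rpow_eq_Gamma {s : ℝ} (hs : 0 < s) :
    ∫⁻ u in Ioi 0, ENNReal.ofReal (Real.exp (-u)) * ENNReal.ofReal (u ^ (s - 1))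
      = ENNReal.ofReal (Real.Gamma s) := by
  have hnonneg : 0 ≤ᵐ[volume.restrict (Ioi 0)] fun u : ℝ => Real.exp (-u) * u ^ (s - 1) := by
    filter_upwards [self_mem_ae_restrict measurableSet_Ioi] with u hu
    exact mul_nonneg (Real.exp_nonneg _) (Real.rpow_nonneg hu.le _)
  rw [Real.Gamma_eq_integral hs,
    ofReal_integral_eq_lintegral_ofReal (Real.GammaIntegral_convergent hs) hnonneg]
  exact lintegral_congr fun u => (ENNReal.ofReal_mul (Real.exp_nonneg _)).symm

def IsScalingCovariant (μ : Measure ℝ) (s : ℝ) : Prop :=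
  ∀ lam : ℝ, 0 < lam → ∀ A : Set ℝ, MeasurableSet A → A ⊆ Ioi 0 →
    μ ((fun u => lam * u) '' A) = ENNReal.ofReal (lam ^ s) * μ A

theorem IsScalingCovariant.measure_Ioc_zero {μ : Measure ℝ} {s : ℝ} (hμ : IsScalingCovariant μ s)
    {q : ℝ} (hq : 0 < q) : μ (Ioc 0 q) = ENNReal.ofReal (q ^ s) * μ (Ioc 0 1) := by
  have h := hμ q hq (Ioc 0 1) measurableSet_Ioc Ioc_subset_Ioi_self
  rwa [image_mul_left_Ioc hq, mul_zero, mul_one] at h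

theorem IsScalingCovariant.eq_smul_powMeasure {μ : Measure ℝ} {s : ℝ} (hμ : IsScalingCovariant μ s)
    (hs : 0 < s) (hsupp : μ (Iic 0) = 0) (hfin : ∀ a, μ (Iic a) ≠ ∞) :
    μ = μ (Ioc 0 1) • powMeasure s := by
  have hsupp' : (μ (Ioc 0 1) • powMeasure s) (Iic 0) = 0 := by
    rw [Measure.smul_apply, powMeasure_Iic_zero, smul_zero]
  refine Measure.ext_of_Iic_of_ne_top _ _ hfin fun q => ?_
  rw [measure_Iic_eq_measure_Ioc hsupp, measure_Iic_eq_measure_Ioc hsupp']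
  rcases le_or_gt q 0 with hq | hq
  · rw [Ioc_eq_empty hq.not_gt, measure_empty, measure_empty]
  · rw [Measure.smul_apply, powMeasure_Ioc_zero hs hq.le, hμ.measure_Ioc_zero hq, smul_eq_mul,
      mul_comm]

theorem mellin_gamma_functional_is_normalized_mellin_transform_general
    (x : ℝ) (hx : 0 < x) (μ : Measure ℝ)
    (hsupp : μ (Iic 0) = 0)
    (hscal : ∀ lam : ℝ, 0 < lam → ∀ A : Set ℝ, MeasurableSet A → A ⊆ Ioi 0 →
      μ ((fun u => lam * u) '' A) = ENNReal.ofReal (lam ^ (x / 2)) * μ A)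
    (hgauss : ∫⁻ u, ENNReal.ofReal (Real.exp (-u)) ∂μ
      = ENNReal.ofReal (Real.pi ^ (x / 2))) :
    ∀ φ : ℝ → ℝ≥0∞, Measurable φ →
      ∫⁻ u, φ u ∂μ
        = ENNReal.ofReal (Real.pi ^ (x / 2) / Real.Gamma (x / 2)) *
            ∫⁻ u in Ioi (0:ℝ), φ u * ENNReal.ofReal (u ^ (x / 2 - 1)) := by
  intro φ hφ
  have hs : 0 < x / 2 := by positivity
  have hfin : ∀ a, μ (Iic a) ≠ ∞ := fun a =>
    ne_top_of_le_ne_top (by rw [hgauss]; finiteness) (measure_Iic_le_exp_mul_lintegral_exp_neg μ a)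
  have hμ := IsScalingCovariant.eq_smul_powMeasure hscal hs hsupp hfin
  have hc : μ (Ioc 0 1) * ENNReal.ofReal (x / 2)
      = ENNReal.ofReal (Real.pi ^ (x / 2) / Real.Gamma (x / 2)) := by
    have hΓ := Real.Gamma_pos_of_pos hs
    rw [hμ, lintegral_smul_measure, lintegral_powMeasure hs.le (by fun_prop),
      lintegral_exp_neg_mul_rpow_eq_Gamma hs, smul_eq_mul] at hgauss
    rw [ENNReal.ofReal_div_of_pos hΓ, ENNReal.eq_div_iff (ENNReal.ofReal_pos.2 hΓ).ne'
      ENNReal.ofReal_ne_top, ← hgauss, mul_comm, mul_assoc]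
  rw [hμ, lintegral_smul_measure, lintegral_powMeasure hs.le hφ, smul_eq_mul, ← mul_assoc, hc]

/-- **Mellin reformulation.** Let `x > 0` and let `μ` be a locally finite
Borel measure on `(0,∞)` (encoded as a Borel measure on `ℝ` vanishing on `(-∞,0]` and
locally finite at every point of `(0,∞)`) satisfying scaling covariance of degree `x/2`
and `∫ e^(-u) dμ(u) = π^(x/2)`.  Then for every nonnegative Borel function `φ`, the
integral of `φ` against `μ` is the normalized Mellin transform
`(π^(x/2)/Γ(x/2)) · ∫₀^∞ φ(u) u^(x/2-1) du`. -/
theorem mellin_gamma_functional_is_normalized_mellin_transform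
    (x : ℝ) (hx : 0 < x) (μ : Measure ℝ)
    (hsupp : μ (Iic 0) = 0)
    (hloc : ∀ u : ℝ, 0 < u → ∃ s ∈ nhds u, μ s < ⊤)
    (hscal : ∀ lam : ℝ, 0 < lam → ∀ A : Set ℝ, MeasurableSet A → A ⊆ Ioi 0 →
      μ ((fun u => lam * u) '' A) = ENNReal.ofReal (lam ^ (x / 2)) * μ A)
    (hgauss : ∫⁻ u, ENNReal.ofReal (Real.exp (-u)) ∂μ
      = ENNReal.ofReal (Real.pi ^ (x / 2))) :
    ∀ φ : ℝ → ℝ≥0∞, Measurable φ →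
      ∫⁻ u, φ u ∂μ
        = ENNReal.ofReal (Real.pi ^ (x / 2) / Real.Gamma (x / 2)) *
            ∫⁻ u in Ioi (0:ℝ), φ u * ENNReal.ofReal (u ^ (x / 2 - 1)) :=
  mellin_gamma_functional_is_normalized_mellin_transform_general x hx μ hsupp hscal hgauss
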